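/- Let Γ be a group, R a Γ-graded ring, and 𝒫 a gr-prime matrix ideal of R. Then no invertible matrix belongs to 𝒫: if A ∈ 𝔐(R) is invertible in the full matrix ring over R, then A ∉ 𝒫. In particular, no identity matrix belongs to 𝒫. -/

import Mathlib

open Matrix

universe u v w

section GradedDefs

variable {Γ : Type u} [Group Γ] {R : Type v} [Ring R]

/-- `A` is a homogeneous matrix of distribution `(α, β)`:
its `(i,j)` entry lies in `𝒜 (α i * (β j)⁻¹)`. -/
def IsHomog (𝒜 : Γ → AddSubgroup R) {m n : ℕ}
    (A : Matrix (Fin m) (Fin n) R) (α : Fin m → Γ) (β : Fin n → Γ) : Prop :=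
  ∀ i j, A i j ∈ 𝒜 (α i * (β j)⁻¹)

/-- `A` is a homogeneous matrix for some distribution. -/
def IsHomogSq (𝒜 : Γ → AddSubgroup R) {m n : ℕ}
    (A : Matrix (Fin m) (Fin n) R) : Prop :=
  ∃ (α : Fin m → Γ) (β : Fin n → Γ), IsHomog 𝒜 A α β

end GradedDefs

/-- Square matrices over `R` of arbitrary finite size. -/
abbrev SqMat (R : Type v) : Type v := Σ n : ℕ, Matrix (Fin n) (Fin n) R

section GradedDefs

variable {Γ : Type u} [Group Γ] {R : Type v} [Ring R]

/-- Diagonal sum `A ⊕ B` of two (rectangular) matrices. -/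
def diagSum {m n m' n' : ℕ} (A : Matrix (Fin m) (Fin n) R)
    (B : Matrix (Fin m') (Fin n') R) : Matrix (Fin (m + m')) (Fin (n + n')) R :=
  Matrix.reindex finSumFinEquiv finSumFinEquiv (Matrix.fromBlocks A 0 0 B)

/-- Block lower triangular matrix `[[A, 0], [C, B]]`. -/
def lowerBlockSum {n m : ℕ} (A : Matrix (Fin n) (Fin n) R) (B : Matrix (Fin m) (Fin m) R)
    (C : Matrix (Fin m) (Fin n) R) : Matrix (Fin (n + m)) (Fin (n + m)) R :=
  Matrix.reindex finSumFinEquiv finSumFinEquiv (Matrix.fromBlocks A 0 C B)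

/-- Block upper triangular matrix `[[A, C], [0, B]]` with rectangular blocks. -/
def upperBlockSum {m n m' n' : ℕ} (A : Matrix (Fin m) (Fin n) R)
    (B : Matrix (Fin m') (Fin n') R) (C : Matrix (Fin m) (Fin n') R) :
    Matrix (Fin (m + m')) (Fin (n + n')) R :=
  Matrix.reindex finSumFinEquiv finSumFinEquiv (Matrix.fromBlocks A C 0 B)

/-- `C` is the determinantal sum of `A` and `B` with respect to some column or row:
`A` and `B` agree away from that column (row) and the distinguished column (row) of `C`
is the sum of the corresponding columns (rows) of `A` and `B`. -/
def IsDetSum {n : ℕ} (A B C : Matrix (Fin n) (Fin n) R) : Prop :=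
  (∃ c : Fin n, (∀ i j, j ≠ c → A i j = B i j) ∧
      ∀ i j, C i j = if j = c then A i j + B i j else A i j) ∨
  (∃ r : Fin n, (∀ i j, i ≠ r → A i j = B i j) ∧
      ∀ i j, C i j = if i = r then A i j + B i j else A i j)

/-- `C` is the determinantal sum of the homogeneous matrices `A` and `B`
(which have a common distribution). -/
def GrDetSum (𝒜 : Γ → AddSubgroup R) {n : ℕ} (A B C : Matrix (Fin n) (Fin n) R) : Prop :=
  (∃ α β : Fin n → Γ, IsHomog 𝒜 A α β ∧ IsHomog 𝒜 B α β) ∧ IsDetSum A B C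

/-- A square homogeneous matrix `A` is gr-full if whenever `A = P * Q` with `P`
homogeneous of distribution `(α, lam)` and `Q` homogeneous of distribution `(lam, β)`
where `lam` has length `r`, then `r ≥ n`. -/
def IsGrFull (𝒜 : Γ → AddSubgroup R) {n : ℕ} (A : Matrix (Fin n) (Fin n) R) : Prop :=
  ∀ (r : ℕ) (P : Matrix (Fin n) (Fin r) R) (Q : Matrix (Fin r) (Fin n) R)
    (α : Fin n → Γ) (lam : Fin r → Γ) (β : Fin n → Γ),
    IsHomog 𝒜 P α lam → IsHomog 𝒜 Q lam β → A = P * Q → n ≤ r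

/-- gr-prime matrix ideal: a set of square homogeneous matrices satisfying (PM1)–(PM6). -/
structure IsGrPrimeMatrixIdeal (𝒜 : Γ → AddSubgroup R) (P : Set (SqMat R)) : Prop where
  subset_homog : ∀ p ∈ P, IsHomogSq 𝒜 p.2
  pm1 : ∀ {n : ℕ} (A : Matrix (Fin n) (Fin n) R),
    IsHomogSq 𝒜 A → ¬ IsGrFull 𝒜 A → (⟨n, A⟩ : SqMat R) ∈ P
  pm2 : ∀ {n : ℕ} (A B C : Matrix (Fin n) (Fin n) R),
    (⟨n, A⟩ : SqMat R) ∈ P → (⟨n, B⟩ : SqMat R) ∈ P → GrDetSum 𝒜 A B C →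
    (⟨n, C⟩ : SqMat R) ∈ P
  pm3 : ∀ {m n : ℕ} (A : Matrix (Fin m) (Fin m) R) (B : Matrix (Fin n) (Fin n) R),
    (⟨m, A⟩ : SqMat R) ∈ P → IsHomogSq 𝒜 B → (⟨m + n, diagSum A B⟩ : SqMat R) ∈ P
  pm4 : ∀ {m n : ℕ} (A : Matrix (Fin m) (Fin m) R) (B : Matrix (Fin n) (Fin n) R),
    IsHomogSq 𝒜 A → IsHomogSq 𝒜 B → (⟨m + n, diagSum A B⟩ : SqMat R) ∈ P →
    (⟨m, A⟩ : SqMat R) ∈ P ∨ (⟨n, B⟩ : SqMat R) ∈ P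
  pm5 : (⟨1, (1 : Matrix (Fin 1) (Fin 1) R)⟩ : SqMat R) ∉ P
  pm6 : ∀ {n : ℕ} (A : Matrix (Fin n) (Fin n) R) (e f : Equiv.Perm (Fin n)),
    (⟨n, A⟩ : SqMat R) ∈ P → (⟨n, A.submatrix ⇑e ⇑f⟩ : SqMat R) ∈ P

/-- gr-matrix ideal: a set of square homogeneous matrices satisfying (I1)–(I5). -/
structure IsGrMatrixIdeal (𝒜 : Γ → AddSubgroup R) (I : Set (SqMat R)) : Prop where
  subset_homog : ∀ p ∈ I, IsHomogSq 𝒜 p.2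
  i1 : ∀ {n : ℕ} (A : Matrix (Fin n) (Fin n) R),
    IsHomogSq 𝒜 A → ¬ IsGrFull 𝒜 A → (⟨n, A⟩ : SqMat R) ∈ I
  i2 : ∀ {n : ℕ} (A B C : Matrix (Fin n) (Fin n) R),
    (⟨n, A⟩ : SqMat R) ∈ I → (⟨n, B⟩ : SqMat R) ∈ I → GrDetSum 𝒜 A B C →
    (⟨n, C⟩ : SqMat R) ∈ I
  i3 : ∀ {m n : ℕ} (A : Matrix (Fin m) (Fin m) R) (B : Matrix (Fin n) (Fin n) R),
    (⟨m, A⟩ : SqMat R) ∈ I → IsHomogSq 𝒜 B → (⟨m + n, diagSum A B⟩ : SqMat R) ∈ I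
  i4 : ∀ {n : ℕ} (A : Matrix (Fin n) (Fin n) R) (e f : Equiv.Perm (Fin n)),
    (⟨n, A⟩ : SqMat R) ∈ I → (⟨n, A.submatrix ⇑e ⇑f⟩ : SqMat R) ∈ I
  i5 : ∀ {n : ℕ} (A : Matrix (Fin n) (Fin n) R),
    (⟨n + 1, diagSum A (1 : Matrix (Fin 1) (Fin 1) R)⟩ : SqMat R) ∈ I →
    (⟨n, A⟩ : SqMat R) ∈ I

/-- The diagonal sum of `r` copies of `A`. -/
def diagIter {n : ℕ} (A : Matrix (Fin n) (Fin n) R) :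
    (r : ℕ) → Matrix (Fin (n * r)) (Fin (n * r)) R
  | 0 => 0
  | r + 1 => diagSum (diagIter A r) A

/-- Iterated determinantal sums (with arbitrary bracketing) of elements of `W`. -/
inductive IsDetSumOf (𝒜 : Γ → AddSubgroup R) (W : Set (SqMat R)) : SqMat R → Prop
  | base (p : SqMat R) (hp : p ∈ W) : IsDetSumOf 𝒜 W p
  | step {n : ℕ} (A B C : Matrix (Fin n) (Fin n) R)
      (hA : IsDetSumOf 𝒜 W ⟨n, A⟩) (hB : IsDetSumOf 𝒜 W ⟨n, B⟩)
      (h : GrDetSum 𝒜 A B C) : IsDetSumOf 𝒜 W ⟨n, C⟩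

/-- The homogeneous rational closure of degree `γ`: entries `(j,i)` of inverses of matrices
`A^f` with `A ∈ Sig` homogeneous of distribution `(α, β)` and `β j * (α i)⁻¹ = γ`. -/
def RatCl (𝒜 : Γ → AddSubgroup R) {S : Type w} [Ring S] (Sig : Set (SqMat R)) (f : R →+* S)
    (γ : Γ) : Set S :=
  {x | ∃ (n : ℕ) (A : Matrix (Fin n) (Fin n) R) (α β : Fin n → Γ) (i j : Fin n)
        (B : Matrix (Fin n) (Fin n) S),
      (⟨n, A⟩ : SqMat R) ∈ Sig ∧ IsHomog 𝒜 A α β ∧ β j * (α i)⁻¹ = γ ∧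
      (A.map ⇑f) * B = 1 ∧ B * (A.map ⇑f) = 1 ∧ B j i = x}

/-- gr-lower semimultiplicative set of square homogeneous matrices. -/
def IsGrLowerSemimult (𝒜 : Γ → AddSubgroup R) (Sig : Set (SqMat R)) : Prop :=
  ((⟨1, (1 : Matrix (Fin 1) (Fin 1) R)⟩ : SqMat R) ∈ Sig) ∧
  ∀ {n m : ℕ} (A : Matrix (Fin n) (Fin n) R) (B : Matrix (Fin m) (Fin m) R)
    (α β : Fin n → Γ) (α' β' : Fin m → Γ) (C : Matrix (Fin m) (Fin n) R),
    (⟨n, A⟩ : SqMat R) ∈ Sig → (⟨m, B⟩ : SqMat R) ∈ Sig →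
    IsHomog 𝒜 A α β → IsHomog 𝒜 B α' β' → IsHomog 𝒜 C α' β →
    (⟨n + m, lowerBlockSum A B C⟩ : SqMat R) ∈ Sig

end GradedDefs

/-- A homomorphism of `Γ`-graded rings from `(R, 𝒜)` to a `Γ`-graded division ring. -/
structure GrDivRingHom (Γ : Type u) [Group Γ] [DecidableEq Γ] (R : Type v) [Ring R]
    (𝒜 : Γ → AddSubgroup R) where
  K : Type (max u v)
  [ringK : Ring K]
  [nontrivialK : Nontrivial K]
  grading : Γ → AddSubgroup K
  internal : DirectSum.IsInternal grading
  one_mem : (1 : K) ∈ grading 1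
  mul_mem : ∀ {γ δ : Γ} {x y : K}, x ∈ grading γ → y ∈ grading δ → x * y ∈ grading (γ * δ)
  isUnit_of_ne : ∀ {γ : Γ} {x : K}, x ∈ grading γ → x ≠ 0 → IsUnit x
  φ : R →+* K
  map_mem : ∀ {γ : Γ} {r : R}, r ∈ 𝒜 γ → φ r ∈ grading γ

attribute [instance] GrDivRingHom.ringK GrDivRingHom.nontrivialK

/-!
An invertible homogeneous matrix `A` has a homogeneous inverse `B`: in each entry of `A⁻¹` keep
only the homogeneous component of the degree prescribed by the distribution of `A`.

Right multiplication by a homogeneous transvection `1 + v eⱼᵀ` (with `vⱼ = 0`) keeps a matrix `M`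
in `𝒫`: `M (1 + v eⱼᵀ)` is the determinantal sum, along column `j`, of `M` and of `M` with its
`j`-th column replaced by `M v`; the latter is `M E` with the `j`-th row of `E` zero, so it
factors through `n - 1` columns and is not gr-full (PM1). By Whitehead's lemma `diag(A, B)` times
a product of three block transvections is `[[0, 1], [-1, 0]]`, and permuting columns turns this
into `1ₙ ⊕ (-1ₙ)`, so (PM4) would put `1ₙ` or `-1ₙ` in `𝒫`. The first is excluded by (PM4) and
(PM5), the second because the same block operations carry `-1ₙ ⊕ -1ₙ` to the identity.
-/

section Homogeneous

variable {Γ : Type u} [Group Γ] {R : Type v} [Ring R] {𝒜 : Γ → AddSubgroup R}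

lemma isHomog_zero {m n : ℕ} (α : Fin m → Γ) (β : Fin n → Γ) :
    IsHomog 𝒜 (0 : Matrix (Fin m) (Fin n) R) α β :=
  fun _ _ => zero_mem _

lemma isHomog_one (hone : (1 : R) ∈ 𝒜 1) {n : ℕ} (α : Fin n → Γ) :
    IsHomog 𝒜 (1 : Matrix (Fin n) (Fin n) R) α α := by
  intro i j
  rcases eq_or_ne i j with rfl | h
  · simpa using hone
  · simp [h]

lemma IsHomog.neg {m n : ℕ} {A : Matrix (Fin m) (Fin n) R} {α β} (hA : IsHomog 𝒜 A α β) :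
    IsHomog 𝒜 (-A) α β :=
  fun i j => neg_mem (hA i j)

lemma IsHomog.add {m n : ℕ} {A B : Matrix (Fin m) (Fin n) R} {α β}
    (hA : IsHomog 𝒜 A α β) (hB : IsHomog 𝒜 B α β) : IsHomog 𝒜 (A + B) α β :=
  fun i j => add_mem (hA i j) (hB i j)

lemma IsHomog.mul (hmul : ∀ {γ δ : Γ} {x y : R}, x ∈ 𝒜 γ → y ∈ 𝒜 δ → x * y ∈ 𝒜 (γ * δ))
    {l m n : ℕ} {A : Matrix (Fin l) (Fin m) R} {B : Matrix (Fin m) (Fin n) R} {α β γ}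
    (hA : IsHomog 𝒜 A α β) (hB : IsHomog 𝒜 B β γ) : IsHomog 𝒜 (A * B) α γ := by
  intro i j
  rw [mul_apply]
  refine AddSubgroup.sum_mem (𝒜 (α i * (γ j)⁻¹)) fun k _ => ?_
  simpa [mul_assoc] using hmul (hA i k) (hB k j)

lemma IsHomog.updateCol {m n : ℕ} {A : Matrix (Fin m) (Fin n) R} {α β}
    (hA : IsHomog 𝒜 A α β) (j : Fin n) {v : Fin m → R} (hv : ∀ i, v i ∈ 𝒜 (α i * (β j)⁻¹)) :
    IsHomog 𝒜 (A.updateCol j v) α β := by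
  intro i k
  rcases eq_or_ne k j with rfl | h
  · simpa using hv i
  · simpa [h] using hA i k

lemma IsHomog.fromBlocks {m m' n n' : ℕ} {A : Matrix (Fin m) (Fin n) R}
    {B : Matrix (Fin m) (Fin n') R} {C : Matrix (Fin m') (Fin n) R} {D : Matrix (Fin m') (Fin n') R}
    {α α' β β'} (hA : IsHomog 𝒜 A α β) (hB : IsHomog 𝒜 B α β') (hC : IsHomog 𝒜 C α' β)
    (hD : IsHomog 𝒜 D α' β') :
    IsHomog 𝒜 (reindex finSumFinEquiv finSumFinEquiv (fromBlocks A B C D))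
      (Sum.elim α α' ∘ finSumFinEquiv.symm) (Sum.elim β β' ∘ finSumFinEquiv.symm) := by
  intro i j
  rcases h₁ : finSumFinEquiv.symm i with s | s <;> rcases h₂ : finSumFinEquiv.symm j with t | t
  · simpa [h₁, h₂] using hA s t
  · simpa [h₁, h₂] using hB s t
  · simpa [h₁, h₂] using hC s t
  · simpa [h₁, h₂] using hD s t

lemma IsHomog.diagSum {m m' n n' : ℕ} {A : Matrix (Fin m) (Fin n) R}
    {B : Matrix (Fin m') (Fin n') R} {α α' β β'} (hA : IsHomog 𝒜 A α β) (hB : IsHomog 𝒜 B α' β') :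
    IsHomog 𝒜 (diagSum A B) (Sum.elim α α' ∘ finSumFinEquiv.symm)
      (Sum.elim β β' ∘ finSumFinEquiv.symm) :=
  hA.fromBlocks (isHomog_zero _ _) (isHomog_zero _ _) hB

end Homogeneous

section HomogeneousPart

open DirectSum

variable {Γ : Type u} [Group Γ] [DecidableEq Γ] {R : Type v} [Ring R] {𝒜 : Γ → AddSubgroup R}
  [Decomposition 𝒜]

lemma decompose_mul_of_left_mem
    (hmul : ∀ {γ δ : Γ} {x y : R}, x ∈ 𝒜 γ → y ∈ 𝒜 δ → x * y ∈ 𝒜 (γ * δ))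
    {δ : Γ} {a : R} (ha : a ∈ 𝒜 δ) (x : R) (γ : Γ) :
    (decompose 𝒜 (a * x) γ : R) = a * decompose 𝒜 x (δ⁻¹ * γ) := by
  induction x using Decomposition.inductionOn 𝒜 with
  | zero => simp
  | @homogeneous ε y =>
    by_cases h : δ * ε = γ
    · obtain rfl := h
      rw [inv_mul_cancel_left, decompose_of_mem_same 𝒜 y.2, decompose_of_mem_same 𝒜 (hmul ha y.2)]
    · rw [decompose_of_mem_ne 𝒜 (hmul ha y.2) h, decompose_of_mem_ne 𝒜 y.2, mul_zero]
      rintro rfl; simp at h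
  | add x y hx hy => simp [mul_add, hx, hy]

lemma decompose_mul_of_right_mem
    (hmul : ∀ {γ δ : Γ} {x y : R}, x ∈ 𝒜 γ → y ∈ 𝒜 δ → x * y ∈ 𝒜 (γ * δ))
    {δ : Γ} {a : R} (ha : a ∈ 𝒜 δ) (x : R) (γ : Γ) :
    (decompose 𝒜 (x * a) γ : R) = decompose 𝒜 x (γ * δ⁻¹) * a := by
  induction x using Decomposition.inductionOn 𝒜 with
  | zero => simp
  | @homogeneous ε y =>
    by_cases h : ε * δ = γ
    · obtain rfl := h
      rw [mul_inv_cancel_right, decompose_of_mem_same 𝒜 y.2, decompose_of_mem_same 𝒜 (hmul y.2 ha)]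
    · rw [decompose_of_mem_ne 𝒜 (hmul y.2 ha) h, decompose_of_mem_ne 𝒜 y.2, zero_mul]
      rintro rfl; simp at h
  | add x y hx hy => simp [add_mul, hx, hy]

variable (𝒜) in
def homogPart {m n : ℕ} (X : Matrix (Fin m) (Fin n) R) (α : Fin m → Γ) (β : Fin n → Γ) :
    Matrix (Fin m) (Fin n) R :=
  of fun i j => decompose 𝒜 (X i j) (α i * (β j)⁻¹)

lemma isHomog_homogPart {m n : ℕ} (X : Matrix (Fin m) (Fin n) R) (α β) :
    IsHomog 𝒜 (homogPart 𝒜 X α β) α β :=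
  fun i j => (decompose 𝒜 (X i j) (α i * (β j)⁻¹)).2

lemma IsHomog.homogPart_eq {m n : ℕ} {X : Matrix (Fin m) (Fin n) R} {α β}
    (hX : IsHomog 𝒜 X α β) : homogPart 𝒜 X α β = X :=
  ext fun i j => decompose_of_mem_same 𝒜 (hX i j)

lemma IsHomog.homogPart_mul_left
    (hmul : ∀ {γ δ : Γ} {x y : R}, x ∈ 𝒜 γ → y ∈ 𝒜 δ → x * y ∈ 𝒜 (γ * δ))
    {l m n : ℕ} {A : Matrix (Fin l) (Fin m) R} {α β} (hA : IsHomog 𝒜 A α β)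
    (X : Matrix (Fin m) (Fin n) R) (γ : Fin n → Γ) :
    homogPart 𝒜 (A * X) α γ = A * homogPart 𝒜 X β γ := by
  ext i j
  simp only [homogPart, of_apply, mul_apply, decompose_sum, DirectSum.sum_apply,
    AddSubgroup.val_finsetSum]
  refine Finset.sum_congr rfl fun k _ => ?_
  rw [decompose_mul_of_left_mem hmul (hA i k)]
  congr 3
  group

lemma IsHomog.homogPart_mul_right
    (hmul : ∀ {γ δ : Γ} {x y : R}, x ∈ 𝒜 γ → y ∈ 𝒜 δ → x * y ∈ 𝒜 (γ * δ))
    {l m n : ℕ} {A : Matrix (Fin m) (Fin n) R} {β γ} (hA : IsHomog 𝒜 A β γ)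
    (X : Matrix (Fin l) (Fin m) R) (α : Fin l → Γ) :
    homogPart 𝒜 (X * A) α γ = homogPart 𝒜 X α β * A := by
  ext i j
  simp only [homogPart, of_apply, mul_apply, decompose_sum, DirectSum.sum_apply,
    AddSubgroup.val_finsetSum]
  refine Finset.sum_congr rfl fun k _ => ?_
  rw [decompose_mul_of_right_mem hmul (hA k j)]
  congr 3
  group

lemma IsHomog.exists_isHomog_inverse
    (hone : (1 : R) ∈ 𝒜 1)
    (hmul : ∀ {γ δ : Γ} {x y : R}, x ∈ 𝒜 γ → y ∈ 𝒜 δ → x * y ∈ 𝒜 (γ * δ))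
    {n : ℕ} {A : Matrix (Fin n) (Fin n) R} {α β} (hA : IsHomog 𝒜 A α β) (hU : IsUnit A) :
    ∃ B : Matrix (Fin n) (Fin n) R, IsHomog 𝒜 B β α ∧ A * B = 1 ∧ B * A = 1 := by
  obtain ⟨⟨A, B, hAB, hBA⟩, rfl⟩ := hU
  refine ⟨homogPart 𝒜 B β α, isHomog_homogPart B β α, ?_, ?_⟩
  · rw [← hA.homogPart_mul_left hmul, hAB, (isHomog_one hone α).homogPart_eq]
  · rw [← hA.homogPart_mul_right hmul, hBA, (isHomog_one hone β).homogPart_eq]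

end HomogeneousPart

section PrimeMatrixIdeal

variable {Γ : Type u} [Group Γ] {R : Type v} [Ring R] {𝒜 : Γ → AddSubgroup R}
  {P : Set (SqMat R)}

lemma diagSum_one_one {m n : ℕ} :
    diagSum (1 : Matrix (Fin m) (Fin m) R) (1 : Matrix (Fin n) (Fin n) R) = 1 := by
  rw [diagSum, fromBlocks_one, reindex_apply, submatrix_one_equiv]

lemma IsGrPrimeMatrixIdeal.one_notMem (hP : IsGrPrimeMatrixIdeal 𝒜 P) (hone : (1 : R) ∈ 𝒜 1)
    (n : ℕ) : (⟨n, (1 : Matrix (Fin n) (Fin n) R)⟩ : SqMat R) ∉ P := by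
  have h₁ : IsHomogSq 𝒜 (1 : Matrix (Fin 1) (Fin 1) R) := ⟨1, 1, isHomog_one hone 1⟩
  induction n with
  | zero =>
    intro h
    have h' := hP.pm3 _ _ h h₁
    rw [diagSum_one_one] at h'
    exact hP.pm5 h'
  | succ n ih =>
    intro h
    rw [← diagSum_one_one] at h
    exact (hP.pm4 _ _ ⟨1, 1, isHomog_one hone 1⟩ h₁ h).elim ih hP.pm5

lemma not_isGrFull_mul_of_row_eq_zero {n : ℕ} {M E : Matrix (Fin (n + 1)) (Fin (n + 1)) R}
    {ρ κ χ : Fin (n + 1) → Γ} (hM : IsHomog 𝒜 M ρ κ) (hE : IsHomog 𝒜 E κ χ) {j : Fin (n + 1)}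
    (hj : ∀ c, E j c = 0) : ¬ IsGrFull 𝒜 (M * E) := by
  intro hfull
  have hME : M * E = M.submatrix id j.succAbove * E.submatrix j.succAbove id := by
    ext i c
    simp [mul_apply, Fin.sum_univ_succAbove _ j, hj]
  have := hfull n _ _ ρ (κ ∘ j.succAbove) χ (fun i k => hM _ _) (fun k c => hE _ _) hME
  omega

variable (𝒜 P) in
def rightStabilizer {N : ℕ} (χ : Fin N → Γ) : Submonoid (Matrix (Fin N) (Fin N) R) where
  carrier := {E | ∀ (ρ : Fin N → Γ) (M : Matrix (Fin N) (Fin N) R), IsHomog 𝒜 M ρ χ →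
    (⟨N, M⟩ : SqMat R) ∈ P → (⟨N, M * E⟩ : SqMat R) ∈ P ∧ IsHomog 𝒜 (M * E) ρ χ}
  mul_mem' {E F} hE hF ρ M hM hMP := by
    obtain ⟨hMEP, hME⟩ := hE ρ M hM hMP
    simpa only [Matrix.mul_assoc] using hF ρ _ hME hMEP
  one_mem' ρ M hM hMP := by simpa using ⟨hMP, hM⟩

lemma IsGrPrimeMatrixIdeal.one_add_updateCol_mem_rightStabilizer
    (hP : IsGrPrimeMatrixIdeal 𝒜 P) (hone : (1 : R) ∈ 𝒜 1)
    (hmul : ∀ {γ δ : Γ} {x y : R}, x ∈ 𝒜 γ → y ∈ 𝒜 δ → x * y ∈ 𝒜 (γ * δ))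
    {N : ℕ} {χ : Fin N → Γ} (j : Fin N) {v : Fin N → R} (hv : ∀ k, v k ∈ 𝒜 (χ k * (χ j)⁻¹))
    (hvj : v j = 0) : 1 + (0 : Matrix (Fin N) (Fin N) R).updateCol j v ∈ rightStabilizer 𝒜 P χ := by
  intro ρ M hM hMP
  have hE : IsHomog 𝒜 ((1 : Matrix (Fin N) (Fin N) R).updateCol j v) χ χ :=
    (isHomog_one hone χ).updateCol j hv
  have hX := hM.mul hmul hE
  have hXP : (⟨N, M * (1 : Matrix (Fin N) (Fin N) R).updateCol j v⟩ : SqMat R) ∈ P := by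
    refine hP.pm1 _ ⟨ρ, χ, hX⟩ ?_
    cases N with
    | zero => exact j.elim0
    | succ n =>
      refine not_isGrFull_mul_of_row_eq_zero hM hE (j := j) fun c => ?_
      rcases eq_or_ne c j with rfl | h
      · simp [hvj]
      · simp [h, h.symm]
  refine ⟨hP.pm2 M _ _ hMP hXP ⟨⟨ρ, χ, hM, hX⟩, Or.inl ⟨j, fun i c hc => ?_, fun i c => ?_⟩⟩,
    hM.mul hmul ((isHomog_one hone χ).add ((isHomog_zero χ χ).updateCol j hv))⟩
  · simp [mul_updateCol, hc]
  · rcases eq_or_ne c j with rfl | h <;> simp [mul_add, mul_updateCol, *]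

lemma IsGrPrimeMatrixIdeal.one_add_mem_rightStabilizer
    (hP : IsGrPrimeMatrixIdeal 𝒜 P) (hone : (1 : R) ∈ 𝒜 1)
    (hmul : ∀ {γ δ : Γ} {x y : R}, x ∈ 𝒜 γ → y ∈ 𝒜 δ → x * y ∈ 𝒜 (γ * δ))
    {N : ℕ} {χ : Fin N → Γ} {T : Matrix (Fin N) (Fin N) R} (hT : IsHomog 𝒜 T χ χ)
    (hTT : ∀ k c l, T k c = 0 ∨ T c l = 0) : 1 + T ∈ rightStabilizer 𝒜 P χ := by
  -- `hTT` makes `1 + T` the product of the transvections `1 + T eⱼeⱼᵀ`, one column at a time.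
  suffices ∀ S : Finset (Fin N),
      1 + of (fun k c => if c ∈ S then T k c else 0) ∈ rightStabilizer 𝒜 P χ by
    have h := this Finset.univ
    simp only [Finset.mem_univ, if_true] at h
    exact h
  intro S
  induction S using Finset.induction_on with
  | empty =>
    convert (rightStabilizer 𝒜 P χ).one_mem
    ext
    simp
  | insert j S hj ih =>
    set T' : Matrix (Fin N) (Fin N) R := of fun k c => if c ∈ S then T k c else 0
    have hT'T : T' *ᵥ (fun k => T k j) = 0 := by
      ext k
      refine Fintype.sum_eq_zero (fun l => T' k l * T l j) fun l => ?_
      rcases hTT k l j with h | h <;> simp [T', h]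
    have key : (1 + T') * (1 + (0 : Matrix (Fin N) (Fin N) R).updateCol j (fun k => T k j)) =
        1 + of fun k c => if c ∈ insert j S then T k c else 0 := by
      rw [mul_add, Matrix.mul_one, mul_updateCol, Matrix.mul_zero, add_mulVec, one_mulVec, hT'T,
        add_zero, add_assoc]
      ext k c
      rcases eq_or_ne c j with rfl | h <;> simp [T', *]
    rw [← key]
    exact mul_mem ih (hP.one_add_updateCol_mem_rightStabilizer hone hmul j (fun k => hT k j)
      ((hTT j j j).elim id id))

lemma IsGrPrimeMatrixIdeal.reindex_fromBlocks_mem_rightStabilizer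
    (hP : IsGrPrimeMatrixIdeal 𝒜 P) (hone : (1 : R) ∈ 𝒜 1)
    (hmul : ∀ {γ δ : Γ} {x y : R}, x ∈ 𝒜 γ → y ∈ 𝒜 δ → x * y ∈ 𝒜 (γ * δ))
    {m n : ℕ} {χ₁ : Fin m → Γ} {χ₂ : Fin n → Γ} {Y : Matrix (Fin m) (Fin n) R}
    {Z : Matrix (Fin n) (Fin m) R} (hY : IsHomog 𝒜 Y χ₁ χ₂) (hZ : IsHomog 𝒜 Z χ₂ χ₁)
    (hYZ : Y = 0 ∨ Z = 0) :
    reindex finSumFinEquiv finSumFinEquiv (fromBlocks 1 Y Z 1) ∈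
      rightStabilizer 𝒜 P (Sum.elim χ₁ χ₂ ∘ finSumFinEquiv.symm) := by
  have h : reindex finSumFinEquiv finSumFinEquiv (fromBlocks 1 Y Z 1) =
      1 + reindex finSumFinEquiv finSumFinEquiv (fromBlocks 0 Y Z 0) := by
    rw [← diagSum_one_one, diagSum]
    ext i j
    simp only [reindex_apply, submatrix_apply, Matrix.add_apply]
    rcases finSumFinEquiv.symm i with s | s <;> rcases finSumFinEquiv.symm j with t | t <;> simp
  rw [h]
  refine hP.one_add_mem_rightStabilizer hone hmul
    ((isHomog_zero _ _).fromBlocks hY hZ (isHomog_zero _ _)) fun k c l => ?_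
  simp only [reindex_apply, submatrix_apply]
  rcases hYZ with rfl | rfl <;> rcases finSumFinEquiv.symm c with t | t
  · right; rcases finSumFinEquiv.symm l with s | s <;> simp
  · left; rcases finSumFinEquiv.symm k with s | s <;> simp
  · left; rcases finSumFinEquiv.symm k with s | s <;> simp
  · right; rcases finSumFinEquiv.symm l with s | s <;> simp

def whiteheadMatrix {n : ℕ} (A B : Matrix (Fin n) (Fin n) R) :
    Matrix (Fin (n + n)) (Fin (n + n)) R :=
  upperBlockSum 1 1 B * lowerBlockSum 1 1 (-A) * upperBlockSum 1 1 B

lemma IsGrPrimeMatrixIdeal.whiteheadMatrix_mem_rightStabilizer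
    (hP : IsGrPrimeMatrixIdeal 𝒜 P) (hone : (1 : R) ∈ 𝒜 1)
    (hmul : ∀ {γ δ : Γ} {x y : R}, x ∈ 𝒜 γ → y ∈ 𝒜 δ → x * y ∈ 𝒜 (γ * δ))
    {n : ℕ} {A B : Matrix (Fin n) (Fin n) R} {α β : Fin n → Γ} (hA : IsHomog 𝒜 A α β)
    (hB : IsHomog 𝒜 B β α) :
    whiteheadMatrix A B ∈ rightStabilizer 𝒜 P (Sum.elim β α ∘ finSumFinEquiv.symm) := by
  have hU := hP.reindex_fromBlocks_mem_rightStabilizer hone hmul hB (isHomog_zero _ _)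
    (.inr rfl)
  have hL := hP.reindex_fromBlocks_mem_rightStabilizer hone hmul (isHomog_zero _ _) hA.neg
    (.inl rfl)
  exact mul_mem (mul_mem hU hL) hU

lemma diagSum_mul_whiteheadMatrix {n : ℕ} {A B : Matrix (Fin n) (Fin n) R} (hAB : A * B = 1)
    (hBA : B * A = 1) :
    diagSum A B * whiteheadMatrix A B =
      reindex finSumFinEquiv finSumFinEquiv (fromBlocks 0 1 (-1) 0) := by
  simp [whiteheadMatrix, diagSum, upperBlockSum, lowerBlockSum, reindex_apply,
    submatrix_mul_equiv, fromBlocks_multiply, hAB, hBA]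

lemma diagSum_neg_one_mul_whiteheadMatrix_one_sq {n : ℕ} :
    diagSum (-1 : Matrix (Fin n) (Fin n) R) (-1) *
      (whiteheadMatrix (1 : Matrix (Fin n) (Fin n) R) 1 * whiteheadMatrix 1 1) = 1 := by
  rw [← diagSum_one_one]
  simp [whiteheadMatrix, diagSum, upperBlockSum, lowerBlockSum, reindex_apply,
    submatrix_mul_equiv, fromBlocks_multiply]

lemma reindex_fromBlocks_submatrix_swap {n : ℕ} :
    (reindex finSumFinEquiv finSumFinEquiv
        (fromBlocks 0 1 (-1) 0 : Matrix (Fin n ⊕ Fin n) (Fin n ⊕ Fin n) R)).submatrix id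
      ((finSumFinEquiv.symm.trans (Equiv.sumComm _ _)).trans finSumFinEquiv) =
      diagSum 1 (-1) := by
  ext i j
  simp only [diagSum, reindex_apply, submatrix_apply, id_eq, Equiv.trans_apply,
    Equiv.symm_apply_apply, Equiv.sumComm_apply]
  rcases finSumFinEquiv.symm i with s | s <;> rcases finSumFinEquiv.symm j with t | t <;> simp

lemma IsGrPrimeMatrixIdeal.neg_one_notMem (hP : IsGrPrimeMatrixIdeal 𝒜 P)
    (hone : (1 : R) ∈ 𝒜 1)
    (hmul : ∀ {γ δ : Γ} {x y : R}, x ∈ 𝒜 γ → y ∈ 𝒜 δ → x * y ∈ 𝒜 (γ * δ)) (n : ℕ) :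
    (⟨n, (-1 : Matrix (Fin n) (Fin n) R)⟩ : SqMat R) ∉ P := by
  intro h
  have h1 : IsHomog 𝒜 (1 : Matrix (Fin n) (Fin n) R) 1 1 := isHomog_one hone 1
  have hW := hP.whiteheadMatrix_mem_rightStabilizer hone hmul h1 h1
  have h2 := (mul_mem hW hW) _ _ (h1.neg.diagSum h1.neg) (hP.pm3 _ _ h ⟨1, 1, h1.neg⟩)
  rw [diagSum_neg_one_mul_whiteheadMatrix_one_sq] at h2
  exact hP.one_notMem hone _ h2.1

lemma IsGrPrimeMatrixIdeal.diagSum_notMem (hP : IsGrPrimeMatrixIdeal 𝒜 P)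
    (hone : (1 : R) ∈ 𝒜 1)
    (hmul : ∀ {γ δ : Γ} {x y : R}, x ∈ 𝒜 γ → y ∈ 𝒜 δ → x * y ∈ 𝒜 (γ * δ))
    {n : ℕ} {A B : Matrix (Fin n) (Fin n) R} {α β : Fin n → Γ} (hA : IsHomog 𝒜 A α β)
    (hB : IsHomog 𝒜 B β α) (hAB : A * B = 1) (hBA : B * A = 1) :
    (⟨n + n, diagSum A B⟩ : SqMat R) ∉ P := by
  intro h
  have hJ := hP.whiteheadMatrix_mem_rightStabilizer hone hmul hA hB _ _ (hA.diagSum hB) h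
  rw [diagSum_mul_whiteheadMatrix hAB hBA] at hJ
  have hswap := hP.pm6 _ (Equiv.refl _)
    ((finSumFinEquiv.symm.trans (Equiv.sumComm _ _)).trans finSumFinEquiv) hJ.1
  rw [Equiv.coe_refl, reindex_fromBlocks_submatrix_swap] at hswap
  rcases hP.pm4 _ _ ⟨α, α, isHomog_one hone α⟩ ⟨β, β, (isHomog_one hone β).neg⟩ hswap with h1 | h1
  · exact hP.one_notMem hone n h1
  · exact hP.neg_one_notMem hone hmul n h1

end PrimeMatrixIdeal

/-- Let `𝒫` be a gr-prime matrix ideal of the `Γ`-graded ring `R`.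
Then no invertible homogeneous square matrix belongs to `𝒫`; in particular no
identity matrix belongs to `𝒫`. -/
theorem grPrime_not_mem_of_isUnit
    {Γ : Type u} [Group Γ] [DecidableEq Γ] {R : Type v} [Ring R]
    (𝒜 : Γ → AddSubgroup R)
    (hinternal : DirectSum.IsInternal 𝒜)
    (hone : (1 : R) ∈ 𝒜 1)
    (hmul : ∀ {γ δ : Γ} {x y : R}, x ∈ 𝒜 γ → y ∈ 𝒜 δ → x * y ∈ 𝒜 (γ * δ))
    (P : Set (SqMat R)) (hP : IsGrPrimeMatrixIdeal 𝒜 P) :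
    (∀ {n : ℕ} (A : Matrix (Fin n) (Fin n) R),
        IsHomogSq 𝒜 A → IsUnit A → (⟨n, A⟩ : SqMat R) ∉ P) ∧
    (∀ n : ℕ, (⟨n, (1 : Matrix (Fin n) (Fin n) R)⟩ : SqMat R) ∉ P) := by
  refine ⟨fun A ⟨α, β, hA⟩ hU hAP => ?_, hP.one_notMem hone⟩
  let := hinternal.chooseDecomposition
  obtain ⟨B, hB, hAB, hBA⟩ := hA.exists_isHomog_inverse hone hmul hU
  exact hP.diagSum_notMem hone hmul hA hB hAB hBA (hP.pm3 A B hAP ⟨β, α, hB⟩)
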